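/- The sparing number of the complete graph K_n is (n−1)(n−2)/2. -/

import Mathlib

/-!
By Cauchy–Davenport, `|A + B| ≥ |A| + |B| - 1` for nonempty finite sets of integers, so the weak
condition `|A + B| = max |A| |B|` forces `A` or `B` to be a singleton. In `Kₙ` every two vertices
are adjacent, hence at most one vertex has a non-singleton label and at least `C(n-1, 2)` edges are
mono-indexed. Conversely, label vertex `k` by `{2^k}`, except vertex `0` by `{1, 2}`: the least
element of the sum of two labels is `2^u + 2^v`, which determines the edge `uv` by uniqueness of
binary expansions, so this is a weak IASI with exactly `C(n-1, 2)` mono-indexed edges.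
-/

open Finset SimpleGraph
open scoped Pointwise

/-- `f` is a weak integer additive set-indexer (weak IASI) of the simple graph `G`:
an injective assignment of nonempty finite sets of non-negative integers to vertices
whose induced sumset-labeling of edges is injective, and such that the set-indexing
number of every edge equals the maximum of those of its end vertices. -/
structure IsWeakIASI {V : Type*} (G : SimpleGraph V) (f : V → Finset ℕ) : Prop where
  nonempty : ∀ v : V, (f v).Nonempty
  injective : Function.Injective f
  edgeInjective : ∀ ⦃u v x y : V⦄, G.Adj u v → G.Adj x y →
    f u + f v = f x + f y → s(u, v) = s(x, y)
  weak : ∀ ⦃u v : V⦄, G.Adj u v → (f u + f v).card = max (f u).card (f v).card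

open scoped Classical in
/-- The number of mono-indexed edges of `G` under the vertex labeling `f`, i.e. the
number of edges both of whose end vertices receive singleton set-labels. -/
noncomputable def monoEdgeCount {V : Type*} [Fintype V] (G : SimpleGraph V)
    (f : V → Finset ℕ) : ℕ :=
  (G.edgeFinset.filter fun e => ∀ v ∈ e, (f v).card = 1).card

/-- The set of numbers of mono-indexed edges over all weak IASIs of `G`; the sparing
number of `G` is the least element of this set. -/
noncomputable def monoCounts {V : Type*} [Fintype V] (G : SimpleGraph V) : Set ℕ :=
  {k : ℕ | ∃ f : V → Finset ℕ, IsWeakIASI G f ∧ monoEdgeCount G f = k}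

theorem IsLeast.add {M : Type*} [Add M] [Preorder M] [AddLeftMono M] [AddRightMono M]
    {s t : Set M} {a b : M} (ha : IsLeast s a) (hb : IsLeast t b) : IsLeast (s + t) (a + b) :=
  ⟨Set.add_mem_add ha.1 hb.1, add_mem_lowerBounds_add ha.2 hb.2⟩

theorem Finset.card_add_eq_max_iff {α : Type*} [LinearOrder α] [Add α]
    [IsCancelAdd α] [AddLeftMono α] [AddRightMono α] {A B : Finset α}
    (hA : A.Nonempty) (hB : B.Nonempty) : #(A + B) = max #A #B ↔ #A = 1 ∨ #B = 1 := by
  have hA₁ := hA.card_pos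
  have hB₁ := hB.card_pos
  constructor
  · intro h
    have : #A + #B - 1 ≤ #(A + B) := cauchy_davenport_add_of_linearOrder_isCancelAdd hA hB
    omega
  · rintro (h | h)
    · obtain ⟨a, rfl⟩ := card_eq_one.1 h
      rw [card_singleton_add, card_singleton]
      omega
    · obtain ⟨b, rfl⟩ := card_eq_one.1 h
      rw [card_add_singleton, card_singleton]
      omega

theorem Nat.sym2_eq_of_two_pow_add_two_pow_eq {a b c d : ℕ} (hab : a ≠ b) (hcd : c ≠ d)
    (h : 2 ^ a + 2 ^ b = 2 ^ c + 2 ^ d) : s(a, b) = s(c, d) := by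
  have hpair : ({a, b} : Finset ℕ) = {c, d} :=
    geomSum_injective le_rfl (by simpa only [sum_pair hab, sum_pair hcd] using h)
  have ha : a ∈ ({c, d} : Finset ℕ) := hpair ▸ mem_insert_self a {b}
  have hb : b ∈ ({c, d} : Finset ℕ) := hpair ▸ mem_insert_of_mem (mem_singleton_self b)
  simp only [mem_insert, mem_singleton] at ha hb
  rw [Sym2.eq_iff]
  omega

section
variable {V : Type*}

theorem card_filter_edgeFinset_top_forall_mem [Fintype V] [DecidableEq V] (T : Finset V) :
    #{e ∈ (⊤ : SimpleGraph V).edgeFinset | ∀ v ∈ e, v ∈ T} = (#T).choose 2 := by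
  rw [← Sym2.card_image_offDiag]
  congr 1
  ext ⟨x, y⟩
  simp only [mem_filter, mem_edgeFinset, edgeSet_top, Set.mem_compl_iff, Sym2.mem_diagSet,
    Sym2.mem_iff, mem_image, mem_offDiag]
  aesop

theorem monoEdgeCount_top [Fintype V] (f : V → Finset ℕ) :
    monoEdgeCount ⊤ f = (#{v | #(f v) = 1}).choose 2 := by
  classical
  rw [← card_filter_edgeFinset_top_forall_mem, monoEdgeCount]
  simp only [mem_filter, mem_univ, true_and]
  convert rfl

variable {G : SimpleGraph V} {f : V → Finset ℕ}

theorem IsWeakIASI.card_eq_one_or_card_eq_one (hf : IsWeakIASI G f) {u v : V} (h : G.Adj u v) :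
    #(f u) = 1 ∨ #(f v) = 1 :=
  (card_add_eq_max_iff (hf.nonempty u) (hf.nonempty v)).1 (hf.weak h)

theorem IsWeakIASI.card_sub_one_le_card_filter_card_eq_one [Fintype V] (hf : IsWeakIASI ⊤ f) :
    Fintype.card V - 1 ≤ #{v | #(f v) = 1} := by
  have hmulti : #{v | ¬#(f v) = 1} ≤ 1 :=
    card_le_one.2 fun u hu v hv ↦ by
      by_contra huv
      simp only [mem_filter, mem_univ, true_and] at hu hv
      exact (hf.card_eq_one_or_card_eq_one huv).elim hu hv
  have := card_filter_add_card_filter_not (s := univ) fun v ↦ #(f v) = 1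
  rw [card_univ] at this
  omega

theorem isWeakIASI_of_isLeast (m : V → ℕ) (hm : ∀ v, IsLeast (f v : Set ℕ) (m v))
    (hm_inj : Function.Injective m)
    (hm_sum : ∀ ⦃u v x y⦄, G.Adj u v → G.Adj x y → m u + m v = m x + m y → s(u, v) = s(x, y))
    (hf : ∀ ⦃u v⦄, G.Adj u v → #(f u) = 1 ∨ #(f v) = 1) : IsWeakIASI G f where
  nonempty v := coe_nonempty.1 ⟨_, (hm v).1⟩
  injective u v h := hm_inj <| (hm u).unique (h ▸ hm v)
  edgeInjective u v x y huv hxy h := hm_sum huv hxy <|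
    ((hm u).add (hm v)).unique (by simpa only [← coe_add, h] using (hm x).add (hm y))
  weak u v h := (card_add_eq_max_iff (coe_nonempty.1 ⟨_, (hm u).1⟩)
    (coe_nonempty.1 ⟨_, (hm v).1⟩)).2 (hf h)

end

def powLabel (k : ℕ) : Finset ℕ := if k = 0 then {1, 2} else {2 ^ k}

theorem isLeast_powLabel (k : ℕ) : IsLeast (powLabel k : Set ℕ) (2 ^ k) := by
  unfold powLabel
  split_ifs with hk
  · subst hk
    simp [IsLeast, lowerBounds]
  · simp

theorem card_powLabel_eq_one_iff {k : ℕ} : #(powLabel k) = 1 ↔ k ≠ 0 := by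
  unfold powLabel
  split_ifs with hk <;> simp [hk]

theorem isWeakIASI_top_powLabel {V : Type*} {g : V → ℕ} (hg : Function.Injective g) :
    IsWeakIASI ⊤ (powLabel ∘ g) := by
  refine isWeakIASI_of_isLeast (fun v ↦ 2 ^ g v) (fun v ↦ isLeast_powLabel (g v))
    ((Nat.pow_right_injective le_rfl).comp hg) (fun u v x y huv hxy h ↦ ?_) fun u v huv ↦ ?_
  · apply Sym2.map.injective hg
    simpa only [Sym2.map_mk] using Nat.sym2_eq_of_two_pow_add_two_pow_eq (hg.ne huv) (hg.ne hxy) h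
  · simp only [Function.comp_apply, card_powLabel_eq_one_iff]
    have := hg.ne huv
    omega

theorem Fin.card_filter_val_ne_zero (n : ℕ) : #{i : Fin n | (i : ℕ) ≠ 0} = n - 1 := by
  cases n <;> simp [filter_ne']

/-- The sparing number of the complete graph `Kₙ` is `(n-1)(n-2)/2`. -/
theorem sparing_number_completeGraph (n : ℕ) :
    IsLeast (monoCounts (⊤ : SimpleGraph (Fin n))) ((n - 1) * (n - 2) / 2) := by
  rw [show (n - 1) * (n - 2) / 2 = (n - 1).choose 2 by rw [Nat.choose_two_right]; rfl]
  refine ⟨⟨powLabel ∘ Fin.val, isWeakIASI_top_powLabel Fin.val_injective, ?_⟩, ?_⟩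
  · simp only [monoEdgeCount_top, Function.comp_apply, card_powLabel_eq_one_iff,
      Fin.card_filter_val_ne_zero]
  · rintro _ ⟨f, hf, rfl⟩
    rw [monoEdgeCount_top]
    have hcard := hf.card_sub_one_le_card_filter_card_eq_one
    rw [Fintype.card_fin] at hcard
    exact Nat.choose_le_choose 2 hcard
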